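/- Let A be an arc contained in the closed unit disk such that at most one endpoint of A lies on the unit circle and no other point of A lies on the unit circle. Then the open unit disk minus A is connected. -/

import Mathlib

/-- `A` is an arc from `p` to `q`. -/
def ArcFrom (p q : ℂ) (A : Set ℂ) : Prop :=
  ∃ f : ℝ → ℂ, ContinuousOn f (Set.Icc 0 1) ∧ Set.InjOn f (Set.Icc 0 1) ∧
    f '' Set.Icc 0 1 = A ∧ f 0 = p ∧ f 1 = q

/-!
An arc `A` does not separate the plane (Borsuk): for `z₀ ∉ A`, `z - z₀` has a continuous logarithm
on `A` (lift along the parametrisation, then extend by Tietze). If `z₀` lay in a bounded open `V`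
with `frontier V ⊆ A`, gluing `exp` of that logarithm on `V` with `z - z₀` outside `V` would give a
nonvanishing map `ℂ → ℂ`, whose logarithm (`ℂ` is simply connected) restricts to a continuous
logarithm of `z - z₀` on a large circle around `z₀`, which does not exist.

Granting this, each part of a separation of `𝔻 \ A` accumulates at points of `∂𝔻 \ A`. Near such a
point `𝔻 \ A` contains a convex set, so the two sets of accumulation points are disjoint closed sets
covering `∂𝔻 \ A`; this set is connected because `A` meets `∂𝔻` in at most one point.
-/

open Set Metric Complex
open scoped Real

theorem exists_continuous_exp_eq {X : Type*} [TopologicalSpace X] [SimplyConnectedSpace X]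
    [LocallyPathConnectedSpace X] {g : X → ℂ} (hg : Continuous g) (hg₀ : ∀ x, g x ≠ 0) :
    ∃ L : X → ℂ, Continuous L ∧ ∀ x, exp (L x) = g x := by
  obtain ⟨x₀⟩ := (inferInstance : Nonempty X)
  obtain ⟨L, ⟨-, hL⟩, -⟩ := isCoveringMapOn_exp.existsUnique_continuousMap_lifts ⟨g, hg⟩
    (exp_log (hg₀ x₀)) hg₀
  exact ⟨L, L.continuous, congrFun hL⟩

theorem not_forall_exp_eq_sub_on_sphere (c : ℂ) {R : ℝ} (hR : 0 < R) {L : ℂ → ℂ}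
    (hL : ContinuousOn L (sphere c R)) : ¬ ∀ z ∈ sphere c R, exp (L z) = z - c := by
  intro hexp
  set γ : ℝ → ℂ := fun t ↦ c + R * exp (t * I)
  have hγ : ∀ t, γ t ∈ sphere c R := fun t ↦ by
    simp [γ, norm_exp_ofReal_mul_I, abs_of_pos hR]
  -- `h` is continuous with values in `2πiℤ`, hence constant, but `h (2π) = h 0 - 2πi`
  set h : ℝ → ℂ := fun t ↦ L (γ t) - (Real.log R + t * I)
  have hmaps : MapsTo h univ (AddSubgroup.zmultiples (2 * π * I)) := fun t _ ↦ by
    have : exp (h t) = 1 := by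
      rw [exp_sub, hexp _ (hγ t), exp_add, ← ofReal_exp, Real.exp_log hR]
      simp [γ, hR.ne']
    obtain ⟨n, hn⟩ := exp_eq_one_iff.mp this
    exact ⟨n, by simp [hn]⟩
  have hdisc : IsDiscrete (AddSubgroup.zmultiples (2 * π * I) : Set ℂ) :=
    isDiscrete_iff_discreteTopology.mpr (NormedSpace.discreteTopology_zmultiples _)
  have hcont : Continuous h := (hL.comp_continuous (by fun_prop) hγ).sub (by fun_prop)
  have := isPreconnected_univ.constant_of_mapsTo hdisc hcont.continuousOn hmaps
    (mem_univ 0) (mem_univ (2 * π))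
  have hper : γ (2 * π) = γ 0 := by simp [γ, exp_two_pi_mul_I]
  simp only [h, hper, ofReal_zero, zero_mul] at this
  push_cast at this
  have : (2 * π * I : ℂ) = 0 := by linear_combination this
  simp [Real.pi_ne_zero, I_ne_zero] at this

theorem ArcFrom.isCompact {p q : ℂ} {A : Set ℂ} (hA : ArcFrom p q A) : IsCompact A := by
  obtain ⟨f, hf, -, rfl, -⟩ := hA
  exact isCompact_Icc.image_of_continuousOn hf

theorem ArcFrom.exists_continuous_exp_eq {p q : ℂ} {A : Set ℂ} (hA : ArcFrom p q A)
    {g : ℂ → ℂ} (hg : ContinuousOn g A) (hg₀ : ∀ z ∈ A, g z ≠ 0) :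
    ∃ G : ℂ → ℂ, Continuous G ∧ ∀ z ∈ A, exp (G z) = g z := by
  obtain ⟨f, hfc, hfi, rfl, -⟩ := hA
  have hf : Continuous ((Icc (0:ℝ) 1).domRestrict f) := hfc.domRestrict
  obtain ⟨L, hLc, hL⟩ := _root_.exists_continuous_exp_eq
    ((hg.comp_continuous hf (fun t ↦ mem_image_of_mem f t.2)).comp continuous_projIcc)
    (fun t ↦ hg₀ _ (mem_image_of_mem f (projIcc 0 1 zero_le_one t).2))
  obtain ⟨G, hG⟩ := ContinuousMap.exists_extension
    (hf.isClosedEmbedding (injOn_iff_injective.mp hfi)) ⟨fun t : Icc (0:ℝ) 1 ↦ L t, by fun_prop⟩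
  refine ⟨G, G.continuous, ?_⟩
  rintro _ ⟨t, ht, rfl⟩
  have := congr($hG ⟨t, ht⟩)
  simp only [ContinuousMap.comp_apply, ContinuousMap.coe_mk, domRestrict_apply] at this
  simp [this, hL, projIcc_of_mem _ ht]

theorem closure_inter_inter_subset_of_separation {X : Type*} [TopologicalSpace X]
    {s u v : Set X} (hv : IsOpen v) (hsuv : s ⊆ u ∪ v) (huv : s ∩ (u ∩ v) = ∅) :
    closure (s ∩ u) ∩ s ⊆ u := by
  rintro x ⟨hxc, hxs⟩
  by_contra hxu
  obtain ⟨y, hyv, hys, hyu⟩ := mem_closure_iff.mp hxc v hv ((hsuv hxs).resolve_left hxu)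
  exact (eq_empty_iff_forall_notMem.mp huv) y ⟨hys, hyu, hyv⟩

theorem isPreconnected_compl_closedBall {E : Type*} [NormedAddCommGroup E] [NormedSpace ℝ E]
    (h : 1 < Module.rank ℝ E) (c : E) {r : ℝ} (hr : 0 ≤ r) : IsPreconnected (closedBall c r)ᶜ := by
  have : (closedBall c r)ᶜ = (fun p : E × ℝ ↦ c + p.2 • p.1) '' (sphere 0 1 ×ˢ Ioi r) := by
    ext z
    simp only [mem_compl_iff, mem_closedBall, not_le, dist_eq_norm, mem_image, mem_prod,
      mem_sphere_zero_iff_norm, mem_Ioi, Prod.exists]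
    constructor
    · intro hz
      have hz₀ : z - c ≠ 0 := norm_pos_iff.mp (hr.trans_lt hz)
      refine ⟨‖z - c‖⁻¹ • (z - c), ‖z - c‖, ⟨norm_smul_inv_norm hz₀, hz⟩, ?_⟩
      rw [smul_inv_smul₀ (norm_ne_zero_iff.mpr hz₀), add_sub_cancel]
    · rintro ⟨u, t, ⟨hu, ht⟩, rfl⟩
      rwa [add_sub_cancel_left, norm_smul, hu, mul_one, Real.norm_of_nonneg (hr.trans ht.le)]
  rw [this]
  exact ((isPreconnected_sphere h 0 1).prod isPreconnected_Ioi).image _ (by fun_prop)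

theorem eq_empty_of_frontier_subset {K V : Set ℂ}
    (hlog : ∀ z₀ ∉ K, ∃ G : ℂ → ℂ, Continuous G ∧ ∀ z ∈ K, exp (G z) = z - z₀)
    (hVb : Bornology.IsBounded V) (hVK : Disjoint V K) (hfr : frontier V ⊆ K) :
    V = ∅ := by
  classical
  refine eq_empty_iff_forall_notMem.mpr fun z₀ hz₀ ↦ ?_
  obtain ⟨G, hGc, hG⟩ := hlog z₀ (hVK.notMem_of_mem_left hz₀)
  -- continuous since `exp ∘ G` and `· - z₀` agree on `frontier V ⊆ K`
  set ψ : ℂ → ℂ := fun z ↦ if z ∈ V then exp (G z) else z - z₀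
  have hψc : Continuous ψ :=
    Continuous.if (fun z hz ↦ hG z (hfr hz)) (by fun_prop) (by fun_prop)
  have hψ₀ : ∀ z, ψ z ≠ 0 := fun z ↦ by
    by_cases hz : z ∈ V
    · simp [ψ, hz, exp_ne_zero]
    · simp only [ψ, hz, if_false, sub_ne_zero]
      rintro rfl
      exact hz hz₀
  obtain ⟨L, hLc, hL⟩ := exists_continuous_exp_eq hψc hψ₀
  obtain ⟨R, hR, hVR⟩ := hVb.subset_ball_lt 0 z₀
  refine not_forall_exp_eq_sub_on_sphere z₀ hR hLc.continuousOn fun z hz ↦ ?_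
  have hzV : z ∉ V := fun h ↦ (mem_ball.mp (hVR h)).ne (mem_sphere.mp hz)
  simp [hL, ψ, hzV]

theorem compl_subset_of_compl_closedBall_subset {K u v : Set ℂ} {R : ℝ}
    (hlog : ∀ z₀ ∉ K, ∃ G : ℂ → ℂ, Continuous G ∧ ∀ z ∈ K, exp (G z) = z - z₀)
    (hK : IsClosed K) (hu : IsOpen u) (hv : IsOpen v) (hcov : Kᶜ ⊆ u ∪ v)
    (hdisj : Kᶜ ∩ (u ∩ v) = ∅) (hR : (closedBall 0 R)ᶜ ⊆ u) : Kᶜ ⊆ u := by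
  have hdisj' : ∀ z ∈ Kᶜ, z ∈ u → z ∉ v := fun z hzK hzu hzv ↦
    (eq_empty_iff_forall_notMem.mp hdisj) z ⟨hzK, hzu, hzv⟩
  set V := Kᶜ ∩ v
  have hVo : IsOpen V := hK.isOpen_compl.inter hv
  have hVb : Bornology.IsBounded V := isBounded_closedBall.subset fun z hz ↦
    not_not.mp fun h ↦ hdisj' z hz.1 (hR h) hz.2
  have hfr : frontier V ⊆ K := by
    intro z hz
    by_contra hzK
    have hzv : z ∈ v := closure_inter_inter_subset_of_separation hu (union_comm u v ▸ hcov)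
      (inter_comm u v ▸ hdisj) ⟨hz.1, hzK⟩
    exact hz.2 (by rw [hVo.interior_eq]; exact ⟨hzK, hzv⟩)
  have hV := eq_empty_of_frontier_subset hlog hVb
    (disjoint_compl_left.mono_left inter_subset_left) hfr
  intro z hz
  by_contra hzu
  exact (eq_empty_iff_forall_notMem.mp hV) z ⟨hz, (hcov hz).resolve_left hzu⟩

theorem isPreconnected_compl_of_forall_exists_exp_eq {K : Set ℂ} (hK : IsCompact K)
    (hlog : ∀ z₀ ∉ K, ∃ G : ℂ → ℂ, Continuous G ∧ ∀ z ∈ K, exp (G z) = z - z₀) :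
    IsPreconnected Kᶜ := by
  rw [isPreconnected_iff_subset_of_disjoint]
  intro u v hu hv hcov hdisj
  obtain ⟨R, hR, hKR⟩ : ∃ R, 0 ≤ R ∧ K ⊆ closedBall 0 R := by
    obtain ⟨R, hR⟩ := hK.isBounded.subset_closedBall 0
    exact ⟨max R 0, le_max_right _ _, hR.trans (closedBall_subset_closedBall (le_max_left _ _))⟩
  have hext : (closedBall (0 : ℂ) R)ᶜ ⊆ Kᶜ := compl_subset_compl.mpr hKR
  rcases isPreconnected_iff_subset_of_disjoint.mp
      (isPreconnected_compl_closedBall (by simp [rank_real_complex]) 0 hR) u v hu hv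
      (hext.trans hcov) (subset_empty_iff.mp (hdisj ▸ inter_subset_inter_left _ hext)) with h | h
  · exact Or.inl (compl_subset_of_compl_closedBall_subset hlog hK.isClosed hu hv hcov hdisj h)
  · exact Or.inr (compl_subset_of_compl_closedBall_subset hlog hK.isClosed hv hu
      (union_comm u v ▸ hcov) (inter_comm u v ▸ hdisj) h)

theorem ArcFrom.isPreconnected_compl {p q : ℂ} {A : Set ℂ} (hA : ArcFrom p q A) :
    IsPreconnected Aᶜ :=
  isPreconnected_compl_of_forall_exists_exp_eq hA.isCompact fun z₀ hz₀ ↦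
    hA.exists_continuous_exp_eq (by fun_prop) fun z hz ↦
      sub_ne_zero.mpr (ne_of_mem_of_not_mem hz hz₀)

theorem isPreconnected_sphere_diff_singleton {c a : ℂ} {r : ℝ} (hr : 0 < r)
    (ha : a ∈ sphere c r) : IsPreconnected (sphere c r \ {a}) := by
  rw [mem_sphere, dist_eq_norm] at ha
  have hac : a - c ≠ 0 := norm_ne_zero_iff.mp (ha ▸ hr.ne')
  -- the normalisation `z ↦ z / ‖z‖` maps the slit plane onto the unit circle minus `-1`
  have : sphere c r \ {a} = (fun z : ℂ ↦ c - (a - c) * (z / ‖z‖)) '' slitPlane := by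
    ext z
    simp only [mem_sdiff, mem_sphere, dist_eq_norm, mem_singleton_iff, mem_image]
    constructor
    · rintro ⟨hz, hza⟩
      set w := (c - z) / (a - c)
      have hw : ‖w‖ = 1 := by
        rw [norm_div, norm_sub_rev, hz, ha, div_self hr.ne']
      have hw' : w ∈ slitPlane := by
        refine singleton_subset_iff.mp ((subset_slitPlane_iff_of_subset_sphere (r := 1)
          (by simpa using hw)).mpr fun h ↦ hza ?_)
        have h : w = -1 := by simpa [eq_comm] using h
        rw [div_eq_iff hac] at h
        linear_combination -h
      refine ⟨w, hw', ?_⟩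
      rw [hw, ofReal_one, div_one, mul_div_cancel₀ _ hac]
      ring
    · rintro ⟨w, hw, rfl⟩
      have hw₀ : (‖w‖ : ℂ) ≠ 0 := ofReal_ne_zero.mpr (norm_ne_zero_iff.mpr (slitPlane_ne_zero hw))
      refine ⟨?_, fun h ↦ ?_⟩
      · rw [sub_sub_cancel_left, norm_neg, norm_mul, ha, norm_div, norm_real, norm_norm,
          div_self (norm_ne_zero_iff.mpr (slitPlane_ne_zero hw)), mul_one]
      · have : w = -(‖w‖ : ℂ) := by
          have h' : (a - c) * (w / ‖w‖ + 1) = 0 := by linear_combination -h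
          have := (mul_eq_zero.mp h').resolve_left hac
          rw [div_add_one hw₀, div_eq_zero_iff] at this
          linear_combination this.resolve_right hw₀
        rw [this, neg_ofReal_mem_slitPlane] at hw
        exact (norm_nonneg w).not_gt hw
  rw [this]
  have hslit := (starConvex_one_slitPlane.isPathConnected one_mem_slitPlane).isConnected
  refine hslit.isPreconnected.image _ fun z hz ↦ ?_
  have : (‖z‖ : ℂ) ≠ 0 := ofReal_ne_zero.mpr (norm_ne_zero_iff.mpr (slitPlane_ne_zero hz))
  fun_prop (disch := exact this)

theorem isConnected_sphere_diff_of_subsingleton {T : Set ℂ} (c : ℂ) {r : ℝ} (hr : 0 < r)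
    (hT : (T ∩ sphere c r).Subsingleton) : IsConnected (sphere c r \ T) := by
  refine ⟨?_, ?_⟩
  · have h₁ : c + r ∈ sphere c r := by simp [abs_of_pos hr]
    have h₂ : c - r ∈ sphere c r := by simp [abs_of_pos hr]
    by_contra h
    rw [not_nonempty_iff_eq_empty, sdiff_eq_empty] at h
    have h₁₂ : (r : ℂ) = 0 := by linear_combination (hT ⟨h h₁, h₁⟩ ⟨h h₂, h₂⟩) / 2
    exact hr.ne' (ofReal_eq_zero.mp h₁₂)
  · rw [← sdiff_inter_self_eq_sdiff]
    rcases hT.eq_empty_or_singleton with h | ⟨a, h⟩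
    · rw [h, sdiff_empty]
      exact isPreconnected_sphere (by simp [rank_real_complex]) c r
    · rw [h]
      exact isPreconnected_sphere_diff_singleton hr (h ▸ mem_singleton a).2

theorem exists_isPreconnected_subset_ball_diff {E : Type*} [NormedAddCommGroup E]
    [NormedSpace ℝ E] {A : Set E} {c s : E} {r : ℝ} (hr : 0 < r) (hA : IsClosed A)
    (hs : s ∈ sphere c r \ A) :
    ∃ B ⊆ ball c r \ A, IsPreconnected B ∧ s ∈ closure B ∧
      ∀ T ⊆ ball c r, s ∈ closure T → (B ∩ T).Nonempty := by
  obtain ⟨ε, hε, hεA⟩ := Metric.isOpen_iff.mp hA.isOpen_compl s hs.2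
  refine ⟨ball s ε ∩ ball c r, fun z hz ↦ ⟨hz.2, hεA hz.1⟩,
    ((convex_ball s ε).inter (convex_ball c r)).isPreconnected,
    isOpen_ball.inter_closure ⟨mem_ball_self hε, ?_⟩, fun T hT hsT ↦ ?_⟩
  · rw [closure_ball c hr.ne']
    exact sphere_subset_closedBall hs.1
  · obtain ⟨y, hyε, hyT⟩ := mem_closure_iff.mp hsT _ isOpen_ball (mem_ball_self hε)
    exact ⟨y, ⟨hyε, hT hyT⟩, hyT⟩

theorem exists_mem_sphere_diff_closure {E : Type*} [NormedAddCommGroup E]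
    [NormedSpace ℝ E] {A W : Set E} {c : E} {r : ℝ} (hr : 0 < r) (hAc : IsPreconnected Aᶜ)
    (hsph : (sphere c r \ A).Nonempty) (hW : IsOpen W) (hWS : W ⊆ ball c r \ A)
    (hWne : W.Nonempty) (hWcl : closure W ∩ (ball c r \ A) ⊆ W) :
    (sphere c r \ A ∩ closure W).Nonempty := by
  by_contra hno
  obtain ⟨s, hs, hsA⟩ := hsph
  have hAW : Aᶜ ⊆ W := by
    refine hAc.subset_of_closure_inter_subset hW ?_ fun z ⟨hzW, hzA⟩ ↦ ?_
    · obtain ⟨w, hw⟩ := hWne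
      exact ⟨w, (hWS hw).2, hw⟩
    · have hz : z ∈ closedBall c r := by
        rw [← closure_ball c hr.ne']
        exact closure_mono (hWS.trans sdiff_subset) hzW
      rw [← ball_union_sphere] at hz
      rcases hz with hz | hz
      · exact hWcl ⟨hzW, hz, hzA⟩
      · exact (hno ⟨z, ⟨hz, hzA⟩, hzW⟩).elim
  exact (mem_sphere.mp hs).not_lt (hWS (hAW hsA)).1

theorem isConnected_ball_diff {E : Type*} [NormedAddCommGroup E] [NormedSpace ℝ E]
    {A : Set E} {c : E} {r : ℝ} (hr : 0 < r) (hA : IsClosed A) (hAc : IsPreconnected Aᶜ)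
    (hsph : IsConnected (sphere c r \ A)) : IsConnected (ball c r \ A) := by
  set S := ball c r \ A
  have hSo : IsOpen S := isOpen_ball.sdiff hA
  obtain ⟨⟨s₀, hs₀⟩, hsph⟩ := hsph
  refine ⟨?_, fun u v hu hv hcov hSu hSv ↦ ?_⟩
  · obtain ⟨B, hBS, -, hsB, -⟩ := exists_isPreconnected_subset_ball_diff hr hA hs₀
    exact (closure_nonempty_iff.mp ⟨s₀, hsB⟩).mono hBS
  by_contra huv
  rw [not_nonempty_iff_eq_empty] at huv
  have hreach : ∀ w w' : Set E, IsOpen w → IsOpen w' → S ⊆ w ∪ w' → S ∩ (w ∩ w') = ∅ →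
      (S ∩ w).Nonempty → (sphere c r \ A ∩ closure (S ∩ w)).Nonempty :=
    fun w w' hw hw' hSww' hww' hSw ↦ exists_mem_sphere_diff_closure hr hAc ⟨s₀, hs₀⟩
      (hSo.inter hw) inter_subset_left hSw
      fun z hz ↦ ⟨hz.2, closure_inter_inter_subset_of_separation hw' hSww' hww' hz⟩
  have hcover : sphere c r \ A ⊆ closure (S ∩ u) ∪ closure (S ∩ v) := by
    intro s hs
    obtain ⟨B, hBS, hB, hsB, -⟩ := exists_isPreconnected_subset_ball_diff hr hA hs
    rcases isPreconnected_iff_subset_of_disjoint.mp hB u v hu hv (hBS.trans hcov)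
        (subset_empty_iff.mp (huv ▸ inter_subset_inter_left _ hBS)) with h | h
    · exact Or.inl (closure_mono (subset_inter hBS h) hsB)
    · exact Or.inr (closure_mono (subset_inter hBS h) hsB)
  obtain ⟨s, hs, hsu, hsv⟩ := isPreconnected_closed_iff.mp hsph (closure (S ∩ u))
    (closure (S ∩ v)) isClosed_closure isClosed_closure hcover (hreach u v hu hv hcov huv hSu)
    (hreach v u hv hu (union_comm u v ▸ hcov) (inter_comm u v ▸ huv) hSv)
  obtain ⟨B, hBS, hB, -, hBnhds⟩ := exists_isPreconnected_subset_ball_diff hr hA hs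
  obtain ⟨x, hx, -, hxu⟩ := hBnhds _ (inter_subset_left.trans sdiff_subset) hsu
  obtain ⟨y, hy, -, hyv⟩ := hBnhds _ (inter_subset_left.trans sdiff_subset) hsv
  obtain ⟨z, hz, hzuv⟩ := hB u v hu hv (hBS.trans hcov) ⟨x, hx, hxu⟩ ⟨y, hy, hyv⟩
  exact (eq_empty_iff_forall_notMem.mp huv) z ⟨hBS hz, hzuv⟩

theorem disk_minus_arc_connected_general (A : Set ℂ) (p q : ℂ)
    (hA : ArcFrom p q A)
    (hsing : (A ∩ Metric.sphere (0:ℂ) 1).Subsingleton) :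
    IsConnected (Metric.ball (0:ℂ) 1 \ A) :=
  isConnected_ball_diff one_pos hA.isCompact.isClosed hA.isPreconnected_compl
    (isConnected_sphere_diff_of_subsingleton 0 one_pos hsing)

theorem disk_minus_arc_connected (A : Set ℂ) (p q : ℂ)
    (hA : ArcFrom p q A)
    (hsub : A ⊆ closure (Metric.ball (0:ℂ) 1))
    (hsing : (A ∩ Metric.sphere (0:ℂ) 1).Subsingleton)
    (hend : A ∩ Metric.sphere (0:ℂ) 1 ⊆ {p, q}) :
    IsConnected (Metric.ball (0:ℂ) 1 \ A) :=
  disk_minus_arc_connected_general A p q hA hsing
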